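/- arXiv:1908.06483 — 2 statements merged into one kernel-verified Lean document; each statement's English description precedes it below -/
import Mathlib

section
/- For every a ≥ 1, the first Dirichlet biharmonic eigenvalue of the rectangle R_a satisfies λ₁(a) ≥ ω₁⁴(a⁴ + a⁻⁴) + 2π⁴. -/
open MeasureTheory Real Filter

noncomputable section

/-- Directional (partial) derivative of `u : ℝ × ℝ → ℝ` in direction `v`. -/
def pd (v : ℝ × ℝ) (u : ℝ × ℝ → ℝ) : ℝ × ℝ → ℝ := fun p => fderiv ℝ u p v

/-- Second partial derivative `∂²u/∂x²`. -/
def uxx (u : ℝ × ℝ → ℝ) : ℝ × ℝ → ℝ := pd (1, 0) (pd (1, 0) u)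

/-- Second partial derivative `∂²u/∂y²`. -/
def uyy (u : ℝ × ℝ → ℝ) : ℝ × ℝ → ℝ := pd (0, 1) (pd (0, 1) u)

/-- Mixed second partial derivative `∂²u/∂x∂y`. -/
def uxy (u : ℝ × ℝ → ℝ) : ℝ × ℝ → ℝ := pd (0, 1) (pd (1, 0) u)

/-- The Laplacian `Δu = u_xx + u_yy`. -/
def lap (u : ℝ × ℝ → ℝ) : ℝ × ℝ → ℝ := fun p => uxx u p + uyy u p

/-- The open rectangle `R_a = (0,a) × (0,1/a)` of unit area. -/
def Rect (a : ℝ) : Set (ℝ × ℝ) := Set.Ioo 0 a ×ˢ Set.Ioo 0 (1 / a)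

/-- Admissible test functions: smooth, compactly supported inside `Ω`. -/
def Adm (Ω : Set (ℝ × ℝ)) (u : ℝ × ℝ → ℝ) : Prop :=
  ContDiff ℝ (⊤ : ℕ∞) u ∧ HasCompactSupport u ∧ tsupport u ⊆ Ω

/-- First Dirichlet eigenvalue of the biharmonic operator on `R_a`,
characterized variationally as the infimum of the Rayleigh quotient. -/
def lam1 (a : ℝ) : ℝ :=
  sInf { μ | ∃ u : ℝ × ℝ → ℝ, Adm (Rect a) u ∧ u ≠ 0 ∧
    μ = (∫ p, (lap u p) ^ 2) / (∫ p, (u p) ^ 2) }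

/-!
Write `∫ (Δu)² = ∫ u_xx² + 2 ∫ u_xy² + ∫ u_yy²` (integration by parts twice) and bound each term by
one-dimensional inequalities on the slices of `R_a`: the clamped beam inequality
`∫ g''² ≥ (ω/L)⁴ ∫ g²` on an interval of length `L` (with `L = a` and `L = 1/a`), and the Poincaré
inequality `∫ g'² ≥ (π/L)² ∫ g²` applied twice to `u_xy`.

Both one-dimensional inequalities follow by the ground-state substitution `g = φ h`, where `φ` is
the first eigenfunction (`sin (π x / L)`, resp. the clamped beam mode), positive on `(0, L)`:
`g'² - (π/L)² g²` resp. `g''² - (ω/L)⁴ g²` is a sum of squares plus an exact derivative. For the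
beam the sum of squares contains `(φ'² - 2 φ φ'') h'²`. The minimality of `ω` gives
`cos t cosh t < 1` on `(0, ω)`, from which the beam mode is positive and `φ'² - 2 φ φ'' ≥ 0`.
-/

open Set Function Topology

namespace ClampedPlate

lemma sinh_lt_mul_cosh {t : ℝ} (ht : 0 < t) : sinh t < t * cosh t := by
  have hmono : StrictMonoOn (fun s => s * cosh s - sinh s) (Ici 0) := by
    refine strictMonoOn_of_deriv_pos (convex_Ici 0) (by fun_prop) fun x hx => ?_
    rw [interior_Ici] at hx
    have hd : HasDerivAt (fun s => s * cosh s - sinh s) (1 * cosh x + x * sinh x - cosh x) x :=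
      ((hasDerivAt_id' x).mul (hasDerivAt_cosh x)).sub (hasDerivAt_sinh x)
    rw [hd.deriv, one_mul, add_sub_cancel_left]
    exact mul_pos hx (sinh_pos_iff.2 hx)
  simpa using hmono self_mem_Ici ht.le ht

lemma cos_mul_cosh_lt_one_of_le_pi_div_two {t : ℝ} (ht : 0 < t) (ht' : t ≤ π / 2) :
    cos t * cosh t < 1 := by
  have hanti : StrictAntiOn (fun s => cos s * cosh s) (Icc 0 (π / 2)) := by
    refine strictAntiOn_of_deriv_neg (convex_Icc 0 (π / 2)) (by fun_prop) fun x hx => ?_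
    rw [interior_Icc] at hx
    have hd : HasDerivAt (fun s => cos s * cosh s) (-sin x * cosh x + cos x * sinh x) x :=
      (hasDerivAt_cos x).mul (hasDerivAt_cosh x)
    rw [hd.deriv]
    have hcos : 0 < cos x := cos_pos_of_mem_Ioo ⟨by linarith [hx.1], hx.2⟩
    -- `cos x sinh x < sin x cosh x` because `tanh x < x < tan x`
    have htan : x * cos x < sin x := by
      have := lt_tan hx.1 hx.2
      rwa [tan_eq_sin_div_cos, lt_div_iff₀ hcos] at this
    nlinarith [sinh_lt_mul_cosh hx.1, cosh_pos x]
  simpa using hanti (left_mem_Icc.2 (by positivity)) ⟨ht.le, ht'⟩ ht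

lemma cos_mul_cosh_lt_one_of_mem_Ioo {ω : ℝ}
    (hω : IsLeast {x : ℝ | 0 < x ∧ cos x * cosh x = 1} ω) {t : ℝ} (ht : t ∈ Ioo 0 ω) :
    cos t * cosh t < 1 := by
  by_contra! h
  set s := min t (π / 2)
  have hs : 0 < s := lt_min ht.1 (by positivity)
  have hIVT := intermediate_value_Icc (min_le_left t (π / 2))
    (f := fun x => cos x * cosh x) (by fun_prop)
  obtain ⟨r, hr, hr1⟩ := hIVT ⟨(cos_mul_cosh_lt_one_of_le_pi_div_two hs (min_le_right _ _)).le, h⟩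
  exact absurd (hω.2 ⟨hs.trans_le hr.1, hr1⟩) (not_le.2 (hr.2.trans_lt ht.2))

/-- The clamped beam mode on `[0, ω]`: it and its first derivative vanish at both ends when
`cos ω * cosh ω = 1`. `beamModeₖ` is its `k`-th derivative, and `beamMode` is its own fourth. -/
def beamMode (ω t : ℝ) : ℝ :=
  (sinh ω - sin ω) * (cosh t - cos t) - (cosh ω - cos ω) * (sinh t - sin t)

def beamMode₁ (ω t : ℝ) : ℝ :=
  (sinh ω - sin ω) * (sinh t + sin t) - (cosh ω - cos ω) * (cosh t - cos t)

def beamMode₂ (ω t : ℝ) : ℝ :=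
  (sinh ω - sin ω) * (cosh t + cos t) - (cosh ω - cos ω) * (sinh t + sin t)

def beamMode₃ (ω t : ℝ) : ℝ :=
  (sinh ω - sin ω) * (sinh t - sin t) - (cosh ω - cos ω) * (cosh t + cos t)

section BeamMode

variable {ω : ℝ}

lemma hasDerivAt_beamMode (t : ℝ) : HasDerivAt (beamMode ω) (beamMode₁ ω t) t := by
  convert (show HasDerivAt (beamMode ω) _ t from
    (((hasDerivAt_cosh t).sub (hasDerivAt_cos t)).const_mul (sinh ω - sin ω)).sub
      (((hasDerivAt_sinh t).sub (hasDerivAt_sin t)).const_mul (cosh ω - cos ω))) using 1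
  rw [beamMode₁]; ring

lemma hasDerivAt_beamMode₁ (t : ℝ) : HasDerivAt (beamMode₁ ω) (beamMode₂ ω t) t := by
  convert (show HasDerivAt (beamMode₁ ω) _ t from
    (((hasDerivAt_sinh t).add (hasDerivAt_sin t)).const_mul (sinh ω - sin ω)).sub
      (((hasDerivAt_cosh t).sub (hasDerivAt_cos t)).const_mul (cosh ω - cos ω))) using 1
  rw [beamMode₂]; ring

lemma hasDerivAt_beamMode₂ (t : ℝ) : HasDerivAt (beamMode₂ ω) (beamMode₃ ω t) t := by
  convert (show HasDerivAt (beamMode₂ ω) _ t from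
    (((hasDerivAt_cosh t).add (hasDerivAt_cos t)).const_mul (sinh ω - sin ω)).sub
      (((hasDerivAt_sinh t).add (hasDerivAt_sin t)).const_mul (cosh ω - cos ω))) using 1
  rw [beamMode₃]; ring

lemma hasDerivAt_beamMode₃ (t : ℝ) : HasDerivAt (beamMode₃ ω) (beamMode ω t) t := by
  convert (show HasDerivAt (beamMode₃ ω) _ t from
    (((hasDerivAt_sinh t).sub (hasDerivAt_sin t)).const_mul (sinh ω - sin ω)).sub
      (((hasDerivAt_cosh t).add (hasDerivAt_cos t)).const_mul (cosh ω - cos ω))) using 1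
  rw [beamMode]; ring

lemma beamMode_zero : beamMode ω 0 = 0 := by simp [beamMode]

lemma beamMode₁_zero : beamMode₁ ω 0 = 0 := by simp [beamMode₁]

lemma beamMode_self : beamMode ω ω = 0 := by rw [beamMode]; ring

lemma beamMode₁_self (h : cos ω * cosh ω = 1) : beamMode₁ ω ω = 0 := by
  rw [beamMode₁]
  linear_combination -cosh_sq_sub_sinh_sq ω - sin_sq_add_cos_sq ω + 2 * h

lemma cos_lt_cosh {t : ℝ} (ht : t ≠ 0) : cos t < cosh t :=
  (cos_le_one t).trans_lt (one_lt_cosh.2 ht)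

lemma strictMonoOn_sinh_sub_sin_div_cosh_sub_cos
    (hω : IsLeast {x : ℝ | 0 < x ∧ cos x * cosh x = 1} ω) :
    StrictMonoOn (fun t => (sinh t - sin t) / (cosh t - cos t)) (Ioc 0 ω) := by
  refine strictMonoOn_of_deriv_pos (convex_Ioc 0 ω)
    (ContinuousOn.div (by fun_prop) (by fun_prop) fun x hx =>
      (sub_pos.2 (cos_lt_cosh hx.1.ne')).ne') fun x hx => ?_
  rw [interior_Ioc] at hx
  have hden := sub_pos.2 (cos_lt_cosh hx.1.ne')
  have hd : HasDerivAt (fun t => (sinh t - sin t) / (cosh t - cos t))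
      (((cosh x - cos x) * (cosh x - cos x) - (sinh x - sin x) * (sinh x - -sin x))
        / (cosh x - cos x) ^ 2) x :=
    ((hasDerivAt_sinh x).sub (hasDerivAt_sin x)).div
      ((hasDerivAt_cosh x).sub (hasDerivAt_cos x)) hden.ne'
  rw [hd.deriv]
  -- the numerator is `2 - 2 cos x cosh x`
  refine div_pos ?_ (by positivity)
  nlinarith [cosh_sq_sub_sinh_sq x, sin_sq_add_cos_sq x, cos_mul_cosh_lt_one_of_mem_Ioo hω hx]

lemma beamMode_pos (hω : IsLeast {x : ℝ | 0 < x ∧ cos x * cosh x = 1} ω) {t : ℝ}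
    (ht : t ∈ Ioo 0 ω) : 0 < beamMode ω t := by
  have hlt := strictMonoOn_sinh_sub_sin_div_cosh_sub_cos hω ⟨ht.1, ht.2.le⟩
    ⟨ht.1.trans ht.2, le_rfl⟩ ht.2
  rw [div_lt_div_iff₀ (sub_pos.2 (cos_lt_cosh ht.1.ne'))
    (sub_pos.2 (cos_lt_cosh (ht.1.trans ht.2).ne'))] at hlt
  rw [beamMode]
  linarith

lemma two_mul_beamMode_mul_beamMode₂_le_sq
    (hω : IsLeast {x : ℝ | 0 < x ∧ cos x * cosh x = 1} ω) {t : ℝ} (ht : t ∈ Icc 0 ω) :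
    2 * beamMode ω t * beamMode₂ ω t ≤ beamMode₁ ω t ^ 2 := by
  set W := fun s => beamMode₁ ω s ^ 2 - 2 * beamMode ω s * beamMode₂ ω s
  have hW : ∀ s, HasDerivAt W (-2 * beamMode ω s * beamMode₃ ω s) s := fun s => by
    convert (show HasDerivAt W _ s from ((hasDerivAt_beamMode₁ s).pow 2).sub
      (((hasDerivAt_beamMode s).const_mul 2).mul (hasDerivAt_beamMode₂ s))) using 1
    ring
  have hWcont : ContinuousOn W (Icc 0 ω) := fun s _ => (hW s).continuousAt.continuousWithinAt
  -- `beamMode₃` increases, so `W' = -2 beamMode * beamMode₃` changes sign once, from `+` to `-`;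
  -- and `W` vanishes at both ends
  have h₃ : StrictMonoOn (beamMode₃ ω) (Icc 0 ω) :=
    strictMonoOn_of_hasDerivWithinAt_pos (convex_Icc 0 ω)
      (fun s _ => (hasDerivAt_beamMode₃ s).continuousAt.continuousWithinAt)
      (fun s _ => (hasDerivAt_beamMode₃ s).hasDerivWithinAt)
      (fun s hs => beamMode_pos hω (by rwa [interior_Icc] at hs))
  suffices 0 ≤ W t by simpa [W] using this
  rcases le_or_gt (beamMode₃ ω t) 0 with h | h
  · have hmono := monotoneOn_of_hasDerivWithinAt_nonneg (convex_Icc 0 t)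
      (hWcont.mono (Icc_subset_Icc_right ht.2)) (fun s _ => (hW s).hasDerivWithinAt)
      (fun s hs => by
        rw [interior_Icc] at hs
        have := h₃ ⟨hs.1.le, hs.2.le.trans ht.2⟩ ht hs.2
        nlinarith [beamMode_pos hω ⟨hs.1, hs.2.trans_le ht.2⟩])
    simpa [W, beamMode_zero, beamMode₁_zero] using
      hmono (left_mem_Icc.2 ht.1) (right_mem_Icc.2 ht.1) ht.1
  · have hanti := antitoneOn_of_hasDerivWithinAt_nonpos (convex_Icc t ω)
      (hWcont.mono (Icc_subset_Icc_left ht.1)) (fun s _ => (hW s).hasDerivWithinAt)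
      (fun s hs => by
        rw [interior_Icc] at hs
        have := h₃ ht ⟨ht.1.trans hs.1.le, hs.2.le⟩ hs.1
        nlinarith [beamMode_pos hω ⟨ht.1.trans_lt hs.1, hs.2⟩])
    simpa [W, beamMode_self, beamMode₁_self hω.1.2] using
      hanti (left_mem_Icc.2 ht.2) (right_mem_Icc.2 ht.2) ht.2

end BeamMode

lemma hasDerivAt_pow_mul_comp_const_mul {f f' : ℝ → ℝ} (hf : ∀ t, HasDerivAt f (f' t) t)
    (k : ℝ) (j : ℕ) (x : ℝ) :
    HasDerivAt (fun x => k ^ j * f (k * x)) (k ^ (j + 1) * f' (k * x)) x := by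
  convert (show HasDerivAt (fun x => k ^ j * f (k * x)) _ x from
    ((hf (k * x)).comp x (hasDerivAt_const_mul k)).const_mul (k ^ j)) using 1
  ring

lemma exists_eq_mul_of_tsupport_subset {E : Type*} [NormedAddCommGroup E] [NormedSpace ℝ E]
    {n : WithTop ℕ∞} {g φ : E → ℝ} {s : Set E} (hg : ContDiff ℝ n g) (hgc : HasCompactSupport g)
    (hgs : tsupport g ⊆ s) (hφ : ContDiff ℝ n φ) (hφs : ∀ x ∈ s, φ x ≠ 0) :
    ∃ h : E → ℝ, ContDiff ℝ n h ∧ HasCompactSupport h ∧ tsupport h ⊆ s ∧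
      g = fun x => φ x * h x := by
  have hzero : ∀ x ∉ s, g =ᶠ[𝓝 x] 0 := fun x hx =>
    notMem_tsupport_iff_eventuallyEq.1 fun h => hx (hgs h)
  have hsupp : support (fun x => g x / φ x) ⊆ support g := fun x hx h => hx (by simp [h])
  refine ⟨fun x => g x / φ x, contDiff_iff_contDiffAt.2 fun x => ?_, hgc.mono hsupp,
    (closure_mono hsupp).trans hgs, funext fun x => ?_⟩
  · by_cases hx : x ∈ s
    · exact hg.contDiffAt.div hφ.contDiffAt (hφs x hx)
    · refine contDiffAt_const (c := 0).congr_of_eventuallyEq ?_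
      filter_upwards [hzero x hx] with y hy
      simp [hy]
  · by_cases hx : x ∈ s
    · exact (mul_div_cancel₀ _ (hφs x hx)).symm
    · simp [(hzero x hx).eq_of_nhds]

lemma integrable_sq_of_hasCompactSupport {X : Type*} [TopologicalSpace X] [MeasurableSpace X]
    [OpensMeasurableSpace X] {μ : Measure X} [IsFiniteMeasureOnCompacts μ] {f : X → ℝ}
    (hf : Continuous f) (hfc : HasCompactSupport f) : Integrable (fun x => f x ^ 2) μ :=
  (hf.pow 2).integrable_of_hasCompactSupport (hfc.comp_left (zero_pow two_ne_zero))

lemma mul_integral_sq_le_integral_sq_of_deriv_le {F G B : ℝ → ℝ} {c : ℝ} (hF : Continuous F)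
    (hFc : HasCompactSupport F) (hG : Continuous G) (hGc : HasCompactSupport G)
    (hB : ContDiff ℝ 1 B) (hBc : HasCompactSupport B)
    (hle : ∀ x, deriv B x ≤ F x ^ 2 - c * G x ^ 2) :
    c * ∫ x, G x ^ 2 ≤ ∫ x, F x ^ 2 := by
  have hF2 := integrable_sq_of_hasCompactSupport (μ := volume) hF hFc
  have hG2 := (integrable_sq_of_hasCompactSupport (μ := volume) hG hGc).const_mul c
  have hB' : Integrable (deriv B) :=
    (hB.continuous_deriv le_rfl).integrable_of_hasCompactSupport hBc.deriv
  have hmono : ∫ x, deriv B x ≤ ∫ x, (F x ^ 2 - c * G x ^ 2) :=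
    integral_mono hB' (hF2.sub hG2) hle
  rw [integral_eq_zero_of_hasDerivAt_of_integrable
    (fun x => (hB.differentiable one_ne_zero x).hasDerivAt) hB'
    (hB.continuous.integrable_of_hasCompactSupport hBc), integral_sub hF2 hG2,
    integral_const_mul] at hmono
  linarith

lemma contDiff_succ_of_hasDerivAt {n : ℕ} {f f' : ℝ → ℝ} (hf : ∀ x, HasDerivAt f (f' x) x)
    (hf' : ContDiff ℝ n f') : ContDiff ℝ (n + 1) f := by
  rw [contDiff_succ_iff_deriv, show deriv f = f' from funext fun x => (hf x).deriv]
  exact ⟨fun x => (hf x).differentiableAt, by simp, hf'⟩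

theorem mul_integral_sq_le_integral_deriv_sq {c : ℝ} {φ φ₁ : ℝ → ℝ} {s : Set ℝ}
    (hφ : ∀ x, HasDerivAt φ (φ₁ x) x) (hφ₁ : ∀ x, HasDerivAt φ₁ (-c * φ x) x)
    (hφs : ∀ x ∈ s, φ x ≠ 0) {g : ℝ → ℝ} (hg : ContDiff ℝ 1 g) (hgc : HasCompactSupport g)
    (hgs : tsupport g ⊆ s) :
    c * ∫ x, g x ^ 2 ≤ ∫ x, deriv g x ^ 2 := by
  have hφc : Continuous φ := continuous_iff_continuousAt.2 fun x => (hφ x).continuousAt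
  have hφ₁' : ContDiff ℝ 1 φ₁ :=
    contDiff_succ_of_hasDerivAt (n := 0) hφ₁ (contDiff_zero.2 (continuous_const.mul hφc))
  have hφ' : ContDiff ℝ 1 φ :=
    contDiff_succ_of_hasDerivAt (n := 0) hφ (contDiff_zero.2 hφ₁'.continuous)
  obtain ⟨h, hh, hhc, -, rfl⟩ := exists_eq_mul_of_tsupport_subset hg hgc hgs hφ' hφs
  have hh' := fun x => (hh.differentiable one_ne_zero x).hasDerivAt
  have hg' : deriv (fun x => φ x * h x) = fun x => φ₁ x * h x + φ x * deriv h x :=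
    funext fun x => ((hφ x).mul (hh' x)).deriv
  have hB : ∀ x, HasDerivAt (fun x => φ x * φ₁ x * h x ^ 2)
      (φ₁ x ^ 2 * h x ^ 2 - c * φ x ^ 2 * h x ^ 2 + 2 * φ x * φ₁ x * h x * deriv h x) x :=
    fun x => by
      convert (show HasDerivAt (fun x => φ x * φ₁ x * h x ^ 2) _ x from
        ((hφ x).mul (hφ₁ x)).mul ((hh' x).pow 2)) using 1
      simp only [Pi.mul_apply]
      ring
  refine mul_integral_sq_le_integral_sq_of_deriv_le (hg.continuous_deriv le_rfl) hgc.deriv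
    hg.continuous hgc (hφ'.mul hφ₁' |>.mul (hh.pow 2))
    (hhc.comp_left (zero_pow two_ne_zero)).mul_left fun x => ?_
  rw [(hB x).deriv, hg']
  -- `g'² - c g² - (φ φ' h²)' = (φ h')²`
  linear_combination sq_nonneg (φ x * deriv h x)

theorem mul_integral_sq_le_integral_deriv_deriv_sq {c : ℝ} {φ φ₁ φ₂ φ₃ : ℝ → ℝ} {s : Set ℝ}
    (hφ : ∀ x, HasDerivAt φ (φ₁ x) x) (hφ₁ : ∀ x, HasDerivAt φ₁ (φ₂ x) x)
    (hφ₂ : ∀ x, HasDerivAt φ₂ (φ₃ x) x) (hφ₃ : ∀ x, HasDerivAt φ₃ (c * φ x) x)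
    (hφs : ∀ x ∈ s, φ x ≠ 0) (hφs' : ∀ x ∈ s, 2 * φ x * φ₂ x ≤ φ₁ x ^ 2) {g : ℝ → ℝ}
    (hg : ContDiff ℝ 2 g) (hgc : HasCompactSupport g) (hgs : tsupport g ⊆ s) :
    c * ∫ x, g x ^ 2 ≤ ∫ x, deriv (deriv g) x ^ 2 := by
  have hφc : Continuous φ := continuous_iff_continuousAt.2 fun x => (hφ x).continuousAt
  have hφ₃' : ContDiff ℝ 1 φ₃ :=
    contDiff_succ_of_hasDerivAt (n := 0) hφ₃ (contDiff_zero.2 (continuous_const.mul hφc))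
  have hφ₂' : ContDiff ℝ 1 φ₂ :=
    contDiff_succ_of_hasDerivAt (n := 0) hφ₂ (contDiff_zero.2 hφ₃'.continuous)
  have hφ₁' : ContDiff ℝ 1 φ₁ :=
    contDiff_succ_of_hasDerivAt (n := 0) hφ₁ (contDiff_zero.2 hφ₂'.continuous)
  have hφ' : ContDiff ℝ 2 φ := contDiff_succ_of_hasDerivAt (n := 1) hφ hφ₁'
  obtain ⟨h, hh, hhc, hhs, rfl⟩ := exists_eq_mul_of_tsupport_subset hg hgc hgs hφ' hφs
  have hh' : ContDiff ℝ 1 (deriv h) := hh.deriv'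
  have hh₁ := fun x => (hh.differentiable two_ne_zero x).hasDerivAt
  have hh₂ := fun x => (hh'.differentiable one_ne_zero x).hasDerivAt
  have hg' : deriv (fun x => φ x * h x) = fun x => φ₁ x * h x + φ x * deriv h x :=
    funext fun x => ((hφ x).mul (hh₁ x)).deriv
  have hg'' : ∀ x, deriv (deriv (fun x => φ x * h x)) x
      = φ₂ x * h x + 2 * φ₁ x * deriv h x + φ x * deriv (deriv h) x := fun x => by
    rw [hg', (show HasDerivAt (fun x => φ₁ x * h x + φ x * deriv h x) _ x from
      ((hφ₁ x).mul (hh₁ x)).add ((hφ x).mul (hh₂ x))).deriv]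
    ring
  set B := fun x => 2 * φ₁ x * φ₂ x * h x ^ 2 + 2 * φ x * φ₁ x * deriv h x ^ 2
    + 2 * φ x * φ₂ x * h x * deriv h x - (φ₁ x * φ₂ x + φ x * φ₃ x) * h x ^ 2
  have hB : ∀ x, HasDerivAt B ((φ₂ x ^ 2 - c * φ x ^ 2) * h x ^ 2
      + 4 * φ₁ x * φ₂ x * h x * deriv h x + (2 * φ₁ x ^ 2 + 4 * φ x * φ₂ x) * deriv h x ^ 2
      + 4 * φ x * φ₁ x * deriv h x * deriv (deriv h) x
      + 2 * φ x * φ₂ x * h x * deriv (deriv h) x) x := fun x => by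
    convert (show HasDerivAt B _ x from
      (((((hφ₁ x).const_mul 2).mul (hφ₂ x)).mul ((hh₁ x).pow 2)).add
        ((((hφ x).const_mul 2).mul (hφ₁ x)).mul ((hh₂ x).pow 2))).add
        (((((hφ x).const_mul 2).mul (hφ₂ x)).mul (hh₁ x)).mul (hh₂ x)) |>.sub
        ((((hφ₁ x).mul (hφ₂ x)).add ((hφ x).mul (hφ₃ x))).mul ((hh₁ x).pow 2))) using 1
    simp only [Pi.mul_apply, Pi.add_apply, Pi.pow_apply]
    ring
  have hBc : HasCompactSupport B := hhc.mono' fun x hx => by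
    by_contra hx'
    refine hx ?_
    simp [B, image_eq_zero_of_notMem_tsupport hx',
      image_eq_zero_of_notMem_tsupport (notMem_subset tsupport_deriv_subset hx')]
  -- `φ'² - 2 φ φ''` is only known to be nonnegative on `s`, but `h'` vanishes off `s`
  have hq : ∀ x, 0 ≤ (φ₁ x ^ 2 - 2 * φ x * φ₂ x) * deriv h x ^ 2 := fun x => by
    by_cases hx : x ∈ s
    · exact mul_nonneg (sub_nonneg.2 (hφs' x hx)) (sq_nonneg _)
    · rw [image_eq_zero_of_notMem_tsupport (notMem_subset (tsupport_deriv_subset.trans hhs) hx)]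
      simp
  have hBd : ContDiff ℝ 1 B := by
    have := hh.of_le one_le_two
    have := hφ'.of_le one_le_two
    simp only [B]
    fun_prop
  refine mul_integral_sq_le_integral_sq_of_deriv_le (hg.deriv' (n := 1)).continuous_deriv_one
    hgc.deriv.deriv hg.continuous hgc hBd hBc fun x => ?_
  rw [(hB x).deriv, hg'']
  -- `g''² - c g² - B' = (φ h'')² + 2 (φ'² - 2 φ φ'') h'²`
  linear_combination 2 * hq x + sq_nonneg (φ x * deriv (deriv h) x)

theorem sq_pi_div_mul_integral_sq_le_integral_deriv_sq {L : ℝ} (hL : 0 < L) {g : ℝ → ℝ}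
    (hg : ContDiff ℝ 1 g) (hgc : HasCompactSupport g) (hgL : tsupport g ⊆ Ioo 0 L) :
    (π / L) ^ 2 * ∫ x, g x ^ 2 ≤ ∫ x, deriv g x ^ 2 := by
  set k := π / L
  refine mul_integral_sq_le_integral_deriv_sq (hasDerivAt_pow_mul_comp_const_mul hasDerivAt_sin k 0)
    (fun x => ?_) (fun x hx => ?_) hg hgc hgL
  · convert hasDerivAt_pow_mul_comp_const_mul hasDerivAt_cos k 1 x using 1
    ring
  · have hkx : k * x < π := by
      rw [div_mul_eq_mul_div, div_lt_iff₀ hL]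
      nlinarith [pi_pos, hx.2]
    exact (mul_pos one_pos (sin_pos_of_pos_of_lt_pi (by have := hx.1; positivity) hkx)).ne'

theorem div_pow_four_mul_integral_sq_le_integral_deriv_deriv_sq {ω L : ℝ}
    (hω : IsLeast {x : ℝ | 0 < x ∧ cos x * cosh x = 1} ω) (hL : 0 < L) {g : ℝ → ℝ}
    (hg : ContDiff ℝ 2 g) (hgc : HasCompactSupport g) (hgL : tsupport g ⊆ Ioo 0 L) :
    (ω / L) ^ 4 * ∫ x, g x ^ 2 ≤ ∫ x, deriv (deriv g) x ^ 2 := by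
  set k := ω / L
  have hk : 0 < k := div_pos hω.1.1 hL
  have hkx : ∀ x ∈ Ioo 0 L, k * x ∈ Ioo 0 ω := fun x hx =>
    ⟨mul_pos hk hx.1, by rw [div_mul_eq_mul_div, div_lt_iff₀ hL]; nlinarith [hω.1.1, hx.2]⟩
  refine mul_integral_sq_le_integral_deriv_deriv_sq
    (hasDerivAt_pow_mul_comp_const_mul (hasDerivAt_beamMode (ω := ω)) k 0)
    (hasDerivAt_pow_mul_comp_const_mul (hasDerivAt_beamMode₁ (ω := ω)) k 1)
    (hasDerivAt_pow_mul_comp_const_mul (hasDerivAt_beamMode₂ (ω := ω)) k 2) (fun x => ?_)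
    (fun x hx => ?_) (fun x hx => ?_) hg hgc hgL
  · convert hasDerivAt_pow_mul_comp_const_mul (hasDerivAt_beamMode₃ (ω := ω)) k 3 x using 1
    ring
  · exact (mul_pos one_pos (beamMode_pos hω (hkx x hx))).ne'
  · have := two_mul_beamMode_mul_beamMode₂_le_sq hω (Ioo_subset_Icc_self (hkx x hx))
    linear_combination (k ^ 2) * this

section PartialDerivatives

variable {u : ℝ × ℝ → ℝ}

lemma contDiff_pd {m n : WithTop ℕ∞} (hu : ContDiff ℝ n u) (hmn : m + 1 ≤ n) (v : ℝ × ℝ) :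
    ContDiff ℝ m (pd v u) :=
  (hu.fderiv_right hmn).clm_apply contDiff_const

lemma _root_.HasCompactSupport.pd (hu : HasCompactSupport u) (v : ℝ × ℝ) :
    HasCompactSupport (pd v u) :=
  hu.fderiv_apply ℝ v

lemma pd_comm (hu : ContDiff ℝ 2 u) (v w : ℝ × ℝ) : pd v (pd w u) = pd w (pd v u) := by
  ext p
  have hd : DifferentiableAt ℝ (fderiv ℝ u) p :=
    (hu.fderiv_right (m := 1) le_rfl).differentiable one_ne_zero p
  have happ : ∀ z z' : ℝ × ℝ, pd z' (pd z u) p = fderiv ℝ (fderiv ℝ u) p z' z := fun z z' => by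
    change fderiv ℝ (fun q => fderiv ℝ u q z) p z' = _
    simp [fderiv_clm_apply hd (differentiableAt_const z)]
  rw [happ, happ, (hu.contDiffAt.isSymmSndFDerivAt (by simp)) v w]

lemma hasDerivAt_comp_prodMk_left (hu : Differentiable ℝ u) (x y : ℝ) :
    HasDerivAt (fun t => u (t, y)) (pd (1, 0) u (x, y)) x :=
  (hu (x, y)).hasFDerivAt.comp_hasDerivAt x ((hasDerivAt_id x).prodMk (hasDerivAt_const x y))

lemma hasDerivAt_comp_prodMk_right (hu : Differentiable ℝ u) (x y : ℝ) :
    HasDerivAt (fun t => u (x, t)) (pd (0, 1) u (x, y)) y :=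
  (hu (x, y)).hasFDerivAt.comp_hasDerivAt y ((hasDerivAt_const y x).prodMk (hasDerivAt_id y))

lemma deriv_comp_prodMk_left (hu : Differentiable ℝ u) (y : ℝ) :
    deriv (fun t => u (t, y)) = fun x => pd (1, 0) u (x, y) :=
  funext fun x => (hasDerivAt_comp_prodMk_left hu x y).deriv

lemma deriv_comp_prodMk_right (hu : Differentiable ℝ u) (x : ℝ) :
    deriv (fun t => u (x, t)) = fun y => pd (0, 1) u (x, y) :=
  funext fun y => (hasDerivAt_comp_prodMk_right hu x y).deriv

lemma _root_.HasCompactSupport.comp_prodMk_left (hu : HasCompactSupport u) (y : ℝ) :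
    HasCompactSupport (fun x => u (x, y)) :=
  (hu.image continuous_fst).of_isClosed_subset isClosed_closure fun x hx =>
    ⟨(x, y), tsupport_comp_subset_preimage u (Continuous.prodMk_left y) hx, rfl⟩

lemma _root_.HasCompactSupport.comp_prodMk_right (hu : HasCompactSupport u) (x : ℝ) :
    HasCompactSupport (fun y => u (x, y)) :=
  (hu.image continuous_snd).of_isClosed_subset isClosed_closure fun y hy =>
    ⟨(x, y), tsupport_comp_subset_preimage u (Continuous.prodMk_right x) hy, rfl⟩

lemma tsupport_comp_prodMk_left_subset {s t : Set ℝ} (hu : tsupport u ⊆ s ×ˢ t) (y : ℝ) :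
    tsupport (fun x => u (x, y)) ⊆ s := fun _ hx =>
  (hu (tsupport_comp_subset_preimage u (Continuous.prodMk_left y) hx)).1

lemma tsupport_comp_prodMk_right_subset {s t : Set ℝ} (hu : tsupport u ⊆ s ×ˢ t) (x : ℝ) :
    tsupport (fun y => u (x, y)) ⊆ t := fun _ hy =>
  (hu (tsupport_comp_subset_preimage u (Continuous.prodMk_right x) hy)).2

end PartialDerivatives

section Fubini

variable {w W : ℝ × ℝ → ℝ} {c : ℝ}

lemma mul_integral_sq_le_of_comp_prodMk_left (hw : Continuous w) (hwc : HasCompactSupport w)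
    (hW : Continuous W) (hWc : HasCompactSupport W)
    (h : ∀ y, c * ∫ x, w (x, y) ^ 2 ≤ ∫ x, W (x, y) ^ 2) :
    c * ∫ p, w p ^ 2 ≤ ∫ p, W p ^ 2 := by
  have hw2 := (integrable_sq_of_hasCompactSupport (μ := volume.prod volume) hw hwc).const_mul c
  have hW2 := integrable_sq_of_hasCompactSupport (μ := volume.prod volume) hW hWc
  rw [← integral_const_mul, Measure.volume_eq_prod, integral_prod_symm _ hw2,
    integral_prod_symm _ hW2]
  exact integral_mono hw2.integral_prod_right hW2.integral_prod_right fun y => by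
    simpa only [integral_const_mul] using h y

lemma mul_integral_sq_le_of_comp_prodMk_right (hw : Continuous w) (hwc : HasCompactSupport w)
    (hW : Continuous W) (hWc : HasCompactSupport W)
    (h : ∀ x, c * ∫ y, w (x, y) ^ 2 ≤ ∫ y, W (x, y) ^ 2) :
    c * ∫ p, w p ^ 2 ≤ ∫ p, W p ^ 2 := by
  have hw2 := (integrable_sq_of_hasCompactSupport (μ := volume.prod volume) hw hwc).const_mul c
  have hW2 := integrable_sq_of_hasCompactSupport (μ := volume.prod volume) hW hWc
  rw [← integral_const_mul, Measure.volume_eq_prod, integral_prod _ hw2, integral_prod _ hW2]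
  exact integral_mono hw2.integral_prod_left hW2.integral_prod_left fun x => by
    simpa only [integral_const_mul] using h x

end Fubini

section IntegrationByParts

variable {u : ℝ × ℝ → ℝ}

lemma integral_mul_pd_eq_neg {f g : ℝ × ℝ → ℝ} (hf : ContDiff ℝ 1 f) (hg : ContDiff ℝ 1 g)
    (hgc : HasCompactSupport g) (v : ℝ × ℝ) :
    ∫ p, f p * pd v g p = -∫ p, pd v f p * g p := by
  have hfv : Continuous (pd v f) := (contDiff_pd hf (m := 0) (by norm_num) v).continuous
  have hgv : Continuous (pd v g) := (contDiff_pd hg (m := 0) (by norm_num) v).continuous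
  exact integral_mul_fderiv_eq_neg_fderiv_mul_of_integrable
    ((hfv.mul hg.continuous).integrable_of_hasCompactSupport hgc.mul_left)
    ((hf.continuous.mul hgv).integrable_of_hasCompactSupport (hgc.pd v).mul_left)
    ((hf.continuous.mul hg.continuous).integrable_of_hasCompactSupport hgc.mul_left)
    (fun p _ => hf.differentiable one_ne_zero p) (fun p _ => hg.differentiable one_ne_zero p)

lemma integral_uxx_mul_uyy (hu : ContDiff ℝ 3 u) (hc : HasCompactSupport u) :
    ∫ p, uxx u p * uyy u p = ∫ p, uxy u p ^ 2 := by
  have hx : ContDiff ℝ 2 (pd (1, 0) u) := contDiff_pd hu le_rfl _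
  have hy : ContDiff ℝ 2 (pd (0, 1) u) := contDiff_pd hu le_rfl _
  have hxc : HasCompactSupport (pd (1, 0) u) := hc.pd _
  have hxy : ContDiff ℝ 1 (uxy u) := contDiff_pd hx le_rfl _
  have hyy : ContDiff ℝ 1 (uyy u) := contDiff_pd hy le_rfl _
  have hcomm : pd (1, 0) (uyy u) = pd (0, 1) (uxy u) := by
    rw [uyy, pd_comm hy, pd_comm (hu.of_le (by norm_num)) (1, 0), uxy]
  calc ∫ p, uxx u p * uyy u p = ∫ p, uyy u p * pd (1, 0) (pd (1, 0) u) p := by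
        simp only [uxx, mul_comm]
    _ = -∫ p, pd (0, 1) (uxy u) p * pd (1, 0) u p := by
        rw [integral_mul_pd_eq_neg hyy (hx.of_le one_le_two) hxc, hcomm]
    _ = -∫ p, pd (1, 0) u p * pd (0, 1) (uxy u) p := by simp only [mul_comm]
    _ = ∫ p, uxy u p ^ 2 := by
        rw [integral_mul_pd_eq_neg (hx.of_le one_le_two) hxy (hxc.pd _), neg_neg]
        simp only [uxy, sq]

lemma integral_lap_sq (hu : ContDiff ℝ 3 u) (hc : HasCompactSupport u) :
    ∫ p, lap u p ^ 2 = (∫ p, uxx u p ^ 2) + 2 * (∫ p, uxy u p ^ 2) + ∫ p, uyy u p ^ 2 := by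
  have hxx : ContDiff ℝ 1 (uxx u) := contDiff_pd (contDiff_pd hu (m := 2) le_rfl _) le_rfl _
  have hyy : ContDiff ℝ 1 (uyy u) := contDiff_pd (contDiff_pd hu (m := 2) le_rfl _) le_rfl _
  have hxxc : HasCompactSupport (uxx u) := (hc.pd _).pd _
  have hyyc : HasCompactSupport (uyy u) := (hc.pd _).pd _
  have hcross : Integrable (fun p => 2 * (uxx u p * uyy u p)) :=
    ((hxx.continuous.mul hyy.continuous).integrable_of_hasCompactSupport hyyc.mul_left).const_mul 2
  rw [← integral_uxx_mul_uyy hu hc, ← integral_const_mul,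
    ← integral_add (integrable_sq_of_hasCompactSupport hxx.continuous hxxc) hcross,
    ← integral_add _ (integrable_sq_of_hasCompactSupport hyy.continuous hyyc)]
  · simp only [lap]
    congr 1 with p
    ring
  · exact (integrable_sq_of_hasCompactSupport hxx.continuous hxxc).add hcross

end IntegrationByParts

section Rectangle

variable {u : ℝ × ℝ → ℝ} {L : ℝ}

lemma sq_pi_div_mul_integral_sq_le_integral_pd_left_sq (hL : 0 < L) (hu : ContDiff ℝ 1 u)
    (hc : HasCompactSupport u) {t : Set ℝ} (hs : tsupport u ⊆ Ioo 0 L ×ˢ t) :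
    (π / L) ^ 2 * ∫ p, u p ^ 2 ≤ ∫ p, pd (1, 0) u p ^ 2 :=
  mul_integral_sq_le_of_comp_prodMk_left hu.continuous hc
    (contDiff_pd hu (m := 0) (by norm_num) _).continuous (hc.pd _) fun y => by
      simpa only [deriv_comp_prodMk_left (hu.differentiable one_ne_zero) y] using
        sq_pi_div_mul_integral_sq_le_integral_deriv_sq hL
          (g := fun x => u (x, y)) (hu.comp (contDiff_id.prodMk contDiff_const))
          (hc.comp_prodMk_left y)
          (tsupport_comp_prodMk_left_subset hs y)

lemma sq_pi_div_mul_integral_sq_le_integral_pd_right_sq (hL : 0 < L) (hu : ContDiff ℝ 1 u)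
    (hc : HasCompactSupport u) {s : Set ℝ} (hs : tsupport u ⊆ s ×ˢ Ioo 0 L) :
    (π / L) ^ 2 * ∫ p, u p ^ 2 ≤ ∫ p, pd (0, 1) u p ^ 2 :=
  mul_integral_sq_le_of_comp_prodMk_right hu.continuous hc
    (contDiff_pd hu (m := 0) (by norm_num) _).continuous (hc.pd _) fun x => by
      simpa only [deriv_comp_prodMk_right (hu.differentiable one_ne_zero) x] using
        sq_pi_div_mul_integral_sq_le_integral_deriv_sq hL
          (g := fun y => u (x, y)) (hu.comp (contDiff_const.prodMk contDiff_id))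
          (hc.comp_prodMk_right x)
          (tsupport_comp_prodMk_right_subset hs x)

variable {ω : ℝ}

lemma div_pow_four_mul_integral_sq_le_integral_uxx_sq 
    (hω : IsLeast {x : ℝ | 0 < x ∧ cos x * cosh x = 1} ω) (hL : 0 < L) (hu : ContDiff ℝ 2 u)
    (hc : HasCompactSupport u) {t : Set ℝ} (hs : tsupport u ⊆ Ioo 0 L ×ˢ t) :
    (ω / L) ^ 4 * ∫ p, u p ^ 2 ≤ ∫ p, uxx u p ^ 2 := by
  have hx : ContDiff ℝ 1 (pd (1, 0) u) := contDiff_pd hu (by norm_num) _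
  refine mul_integral_sq_le_of_comp_prodMk_left hu.continuous hc
    (contDiff_pd hx (m := 0) (by norm_num) _).continuous ((hc.pd _).pd _) fun y => ?_
  simpa only [deriv_comp_prodMk_left (hu.differentiable two_ne_zero) y,
      deriv_comp_prodMk_left (hx.differentiable one_ne_zero) y, uxx] using
    div_pow_four_mul_integral_sq_le_integral_deriv_deriv_sq hω hL
      (g := fun x => u (x, y)) (hu.comp (contDiff_id.prodMk contDiff_const))
          (hc.comp_prodMk_left y)
      (tsupport_comp_prodMk_left_subset hs y)

lemma div_pow_four_mul_integral_sq_le_integral_uyy_sq 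
    (hω : IsLeast {x : ℝ | 0 < x ∧ cos x * cosh x = 1} ω) (hL : 0 < L) (hu : ContDiff ℝ 2 u)
    (hc : HasCompactSupport u) {s : Set ℝ} (hs : tsupport u ⊆ s ×ˢ Ioo 0 L) :
    (ω / L) ^ 4 * ∫ p, u p ^ 2 ≤ ∫ p, uyy u p ^ 2 := by
  have hy : ContDiff ℝ 1 (pd (0, 1) u) := contDiff_pd hu (by norm_num) _
  refine mul_integral_sq_le_of_comp_prodMk_right hu.continuous hc
    (contDiff_pd hy (m := 0) (by norm_num) _).continuous ((hc.pd _).pd _) fun x => ?_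
  simpa only [deriv_comp_prodMk_right (hu.differentiable two_ne_zero) x,
      deriv_comp_prodMk_right (hy.differentiable one_ne_zero) x, uyy] using
    div_pow_four_mul_integral_sq_le_integral_deriv_deriv_sq hω hL
      (g := fun y => u (x, y)) (hu.comp (contDiff_const.prodMk contDiff_id))
      (hc.comp_prodMk_right x)
      (tsupport_comp_prodMk_right_subset hs x)

lemma pi_pow_four_mul_integral_sq_le_integral_uxy_sq {a : ℝ} (ha : 0 < a) (hu : ContDiff ℝ 2 u)
    (hc : HasCompactSupport u) (hs : tsupport u ⊆ Rect a) :
    π ^ 4 * ∫ p, u p ^ 2 ≤ ∫ p, uxy u p ^ 2 := by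
  have hx := sq_pi_div_mul_integral_sq_le_integral_pd_left_sq ha (hu.of_le one_le_two) hc hs
  have hxy := sq_pi_div_mul_integral_sq_le_integral_pd_right_sq (one_div_pos.2 ha)
    (contDiff_pd hu (by norm_num) (1, 0)) (hc.pd _) ((tsupport_fderiv_apply_subset ℝ _).trans hs)
  calc π ^ 4 * ∫ p, u p ^ 2 = (π / (1 / a)) ^ 2 * ((π / a) ^ 2 * ∫ p, u p ^ 2) := by
        field_simp
    _ ≤ (π / (1 / a)) ^ 2 * ∫ p, pd (1, 0) u p ^ 2 := by gcongr
    _ ≤ ∫ p, uxy u p ^ 2 := hxy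

theorem mul_integral_sq_le_integral_lap_sq
    (hω : IsLeast {x : ℝ | 0 < x ∧ cos x * cosh x = 1} ω) {a : ℝ} (ha : 0 < a)
    (hu : ContDiff ℝ 3 u) (hc : HasCompactSupport u) (hs : tsupport u ⊆ Rect a) :
    (ω ^ 4 * (a ^ 4 + a ^ (-4 : ℤ)) + 2 * π ^ 4) * ∫ p, u p ^ 2 ≤ ∫ p, lap u p ^ 2 := by
  have hu₂ : ContDiff ℝ 2 u := hu.of_le (by norm_num)
  have hxx := div_pow_four_mul_integral_sq_le_integral_uxx_sq hω ha hu₂ hc hs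
  have hyy := div_pow_four_mul_integral_sq_le_integral_uyy_sq hω (one_div_pos.2 ha) hu₂ hc hs
  have hxy := pi_pow_four_mul_integral_sq_le_integral_uxy_sq ha hu₂ hc hs
  have hω4 : ω ^ 4 * (a ^ 4 + a ^ (-4 : ℤ)) = (ω / a) ^ 4 + (ω / (1 / a)) ^ 4 := by
    rw [zpow_neg, zpow_ofNat]
    field_simp
    ring
  rw [integral_lap_sq hu hc, hω4]
  linarith

end Rectangle

lemma integral_sq_pos {X : Type*} [TopologicalSpace X] [MeasurableSpace X] [OpensMeasurableSpace X]
    {μ : Measure X} [IsFiniteMeasureOnCompacts μ] [μ.IsOpenPosMeasure] {f : X → ℝ}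
    (hf : Continuous f) (hfc : HasCompactSupport f) (hne : f ≠ 0) : 0 < ∫ x, f x ^ 2 ∂μ := by
  obtain ⟨x, hx⟩ := Function.ne_iff.1 hne
  exact (hf.pow 2).integral_pos_of_hasCompactSupport_nonneg_nonzero
    (hfc.comp_left (zero_pow two_ne_zero)) (fun x => sq_nonneg (f x)) (pow_ne_zero 2 hx)

lemma exists_adm_ne_zero {Ω : Set (ℝ × ℝ)} (hΩ : IsOpen Ω) (hne : Ω.Nonempty) :
    ∃ u, Adm Ω u ∧ u ≠ 0 := by
  obtain ⟨p, hp⟩ := hne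
  obtain ⟨u, hus, huc, hu, -, hup⟩ := exists_contDiff_tsupport_subset (n := ⊤) (hΩ.mem_nhds hp)
  exact ⟨u, ⟨hu, huc, hus⟩, fun h => by simp [h] at hup⟩

end ClampedPlate

/-- Simple explicit lower bound: `λ₁(a) ≥ ω₁⁴(a⁴ + a⁻⁴) + 2π⁴`, where `ω₁` is
the smallest positive root of `cos ω · cosh ω = 1`. -/
theorem first_eigenvalue_explicit_lower_bound
    (ω : ℝ) (hω : IsLeast {x : ℝ | 0 < x ∧ Real.cos x * Real.cosh x = 1} ω)
    (a : ℝ) (ha : 1 ≤ a) :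
    lam1 a ≥ ω ^ 4 * (a ^ 4 + a ^ (-4 : ℤ)) + 2 * π ^ 4 := by
  have ha₀ : 0 < a := one_pos.trans_le ha
  obtain ⟨u₀, hu₀, hne₀⟩ := ClampedPlate.exists_adm_ne_zero (isOpen_Ioo.prod isOpen_Ioo)
    ((nonempty_Ioo.2 ha₀).prod (nonempty_Ioo.2 (one_div_pos.2 ha₀)))
  refine le_csInf ⟨_, u₀, hu₀, hne₀, rfl⟩ ?_
  rintro _ ⟨u, ⟨hu, hc, hs⟩, hne, rfl⟩
  rw [le_div_iff₀ (ClampedPlate.integral_sq_pos hu.continuous hc hne)]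
  exact ClampedPlate.mul_integral_sq_le_integral_lap_sq hω ha₀
    (hu.of_le (WithTop.coe_le_coe.2 le_top)) hc hs
end
end

section
/- For every smooth function v compactly supported in the open interval (0,1), the clamped-beam inequality ∫₀¹ (v''(x))² dx ≥ ω₁⁴ ∫₀¹ v(x)² dx holds, where ω₁ is the smallest positive root of cos(ω)cosh(ω) = 1. -/
/-!
Ground-state substitution. Let `φ(t) = cosh t - cos t - σ (sinh t - sin t)` with
`σ = (cosh ω - cos ω) / (sinh ω - sin ω)`, so that `Y(x) = φ(ω x)` solves `Y'''' = ω⁴ Y` with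
`Y = Y' = 0` at both ends (the condition `Y'(1) = 0` is `cos ω cosh ω = 1`). Writing `v = Y u`,
`(v'')² - ω⁴ v² = (Y u'')² + 2 (Y'² - 2 Y Y'') (u')² + B'` for an explicit flux `B` vanishing
wherever `u = u' = 0`, so it suffices that `Y > 0` on `(0, 1)` and `Y'² ≥ 2 Y Y''` on `[0, 1]`.

Since `φ(t) = (sinh t - sin t) (r t - r ω)` with `r t = (cosh t - cos t) / (sinh t - sin t)`, and
`r'` has the sign of `cos t cosh t - 1`, which is negative below the first root `ω`, `φ > 0` on
`(0, ω)`. Then `φ'''` increases on `[0, ω]`, so `φ'² - 2 φ φ''`, whose derivative is `-2 φ φ'''`,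
first increases and then decreases; it vanishes at `0` and `ω`, hence is nonnegative in between.
-/

open MeasureTheory Real Filter

noncomputable section


/-- Admissible one-dimensional test functions: smooth, compactly supported in `(0,1)`. -/
def Adm1 (v : ℝ → ℝ) : Prop :=
  ContDiff ℝ (⊤ : ℕ∞) v ∧ HasCompactSupport v ∧ tsupport v ⊆ Set.Ioo 0 1

/-- `ρ(α)`: first eigenvalue of `y'''' - 2αy'' = λy` on `(0,1)` with clamped
boundary conditions, characterized variationally. -/
def rho (α : ℝ) : ℝ :=
  sInf { r | ∃ v : ℝ → ℝ, Adm1 v ∧ (∫ x in (0:ℝ)..1, (v x) ^ 2) = 1 ∧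
    r = (∫ x in (0:ℝ)..1, (deriv (deriv v) x) ^ 2) +
        2 * α * (∫ x in (0:ℝ)..1, (deriv v x) ^ 2) }

open Set

lemma hasDerivAt_comp_mul {f f' : ℝ → ℝ} (hf : ∀ t, HasDerivAt f (f' t) t) (ω x : ℝ) :
    HasDerivAt (fun x => f (ω * x)) (ω * f' (ω * x)) x :=
  ((hf (ω * x)).comp x ((hasDerivAt_id x).const_mul ω)).congr_deriv (by ring)

lemma contDiff_div_of_ne_zero_on_tsupport {E : Type*} [NormedAddCommGroup E] [NormedSpace ℝ E]
    {n : WithTop ℕ∞} {v Y : E → ℝ} (hv : ContDiff ℝ n v) (hY : ContDiff ℝ n Y)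
    (h : ∀ x ∈ tsupport v, Y x ≠ 0) : ContDiff ℝ n fun x => v x / Y x := by
  refine contDiff_iff_contDiffAt.2 fun x => ?_
  by_cases hx : x ∈ tsupport v
  · exact hv.contDiffAt.div hY.contDiffAt (h x hx)
  · refine contDiffAt_const (c := (0 : ℝ)).congr_of_eventuallyEq ?_
    filter_upwards [(isClosed_tsupport v).isOpen_compl.mem_nhds hx] with y hy
    simp [image_eq_zero_of_notMem_tsupport hy]

lemma nonneg_of_hasDerivAt_neg_mul_of_monotoneOn {F φ ψ : ℝ → ℝ} {a b t : ℝ}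
    (hF : ∀ x, HasDerivAt F (-(φ x * ψ x)) x) (hφ : ∀ x ∈ Ioo a b, 0 ≤ φ x)
    (hψ : MonotoneOn ψ (Icc a b)) (ha : 0 ≤ F a) (hb : 0 ≤ F b) (ht : t ∈ Icc a b) :
    0 ≤ F t := by
  have hFc : Continuous F := continuous_iff_continuousAt.2 fun x => (hF x).continuousAt
  rcases le_total (ψ t) 0 with hψt | hψt
  · refine ha.trans <| monotoneOn_of_hasDerivWithinAt_nonneg (convex_Icc a t) hFc.continuousOn
      (fun x _ => (hF x).hasDerivWithinAt) (fun x hx => ?_) (left_mem_Icc.2 ht.1)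
      (right_mem_Icc.2 ht.1) ht.1
    rw [interior_Icc] at hx
    have := hψ ⟨hx.1.le, hx.2.le.trans ht.2⟩ ht hx.2.le
    nlinarith [hφ x ⟨hx.1, hx.2.trans_le ht.2⟩]
  · refine hb.trans <| antitoneOn_of_hasDerivWithinAt_nonpos (convex_Icc t b) hFc.continuousOn
      (fun x _ => (hF x).hasDerivWithinAt) (fun x hx => ?_) (left_mem_Icc.2 ht.2)
      (right_mem_Icc.2 ht.2) ht.2
    rw [interior_Icc] at hx
    have := hψ ht ⟨ht.1.trans hx.1.le, hx.2.le⟩ hx.1.le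
    nlinarith [hφ x ⟨ht.1.trans_lt hx.1, hx.2⟩]

section GroundState

variable {Y₀ Y₁ Y₂ Y₃ u : ℝ → ℝ} {μ a b : ℝ}

lemma contDiff_two_of_hasDerivAt (h₀ : ∀ x, HasDerivAt Y₀ (Y₁ x) x)
    (h₁ : ∀ x, HasDerivAt Y₁ (Y₂ x) x) (h₂ : ∀ x, HasDerivAt Y₂ (Y₃ x) x) :
    ContDiff ℝ 2 Y₀ := by
  have hY₁ : ContDiff ℝ 1 Y₁ := by
    rw [contDiff_one_iff_deriv, funext fun x => (h₁ x).deriv]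
    exact ⟨fun x => (h₁ x).differentiableAt,
      continuous_iff_continuousAt.2 fun x => (h₂ x).continuousAt⟩
  rw [show (2 : WithTop ℕ∞) = 1 + 1 from rfl, contDiff_succ_iff_deriv, funext fun x => (h₀ x).deriv]
  exact ⟨fun x => (h₀ x).differentiableAt, by simp, hY₁⟩

lemma deriv_deriv_mul_eq (h₀ : ∀ x, HasDerivAt Y₀ (Y₁ x) x) (h₁ : ∀ x, HasDerivAt Y₁ (Y₂ x) x)
    (hu : ContDiff ℝ 2 u) (x : ℝ) :
    deriv (deriv fun x => Y₀ x * u x) x =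
      Y₂ x * u x + 2 * Y₁ x * deriv u x + Y₀ x * deriv (deriv u) x := by
  have hu₁ : Differentiable ℝ u := hu.differentiable (by norm_num)
  have hu₂ : Differentiable ℝ (deriv u) := hu.differentiable_deriv_two
  have hd : deriv (fun x => Y₀ x * u x) = fun x => Y₁ x * u x + Y₀ x * deriv u x :=
    funext fun x => ((h₀ x).mul (hu₁ x).hasDerivAt).deriv
  rw [hd]
  exact (((h₁ x).mul (hu₁ x).hasDerivAt).add ((h₀ x).mul (hu₂ x).hasDerivAt)).deriv.trans (by ring)

def groundStateFlux (Y₀ Y₁ Y₂ Y₃ u : ℝ → ℝ) (x : ℝ) : ℝ :=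
  (Y₁ x * Y₂ x - Y₀ x * Y₃ x) * u x ^ 2 + 2 * Y₀ x * Y₂ x * u x * deriv u x +
    2 * Y₀ x * Y₁ x * deriv u x ^ 2

lemma hasDerivAt_groundStateFlux (h₀ : ∀ x, HasDerivAt Y₀ (Y₁ x) x)
    (h₁ : ∀ x, HasDerivAt Y₁ (Y₂ x) x) (h₂ : ∀ x, HasDerivAt Y₂ (Y₃ x) x)
    (h₃ : ∀ x, HasDerivAt Y₃ (μ * Y₀ x) x) (hu : ContDiff ℝ 2 u) (x : ℝ) :
    HasDerivAt (groundStateFlux Y₀ Y₁ Y₂ Y₃ u)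
      ((Y₂ x * u x + 2 * Y₁ x * deriv u x + Y₀ x * deriv (deriv u) x) ^ 2 - μ * (Y₀ x * u x) ^ 2 -
        ((Y₀ x * deriv (deriv u) x) ^ 2 + 2 * (Y₁ x ^ 2 - 2 * Y₀ x * Y₂ x) * deriv u x ^ 2)) x := by
  have hu₁ := (hu.differentiable (by norm_num) x).hasDerivAt
  have hu₂ := (hu.differentiable_deriv_two x).hasDerivAt
  have h := ((((h₁ x).mul (h₂ x)).sub ((h₀ x).mul (h₃ x))).mul (hu₁.pow 2)).add
    (((((h₀ x).const_mul 2).mul (h₂ x)).mul hu₁).mul hu₂) |>.add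
    ((((h₀ x).const_mul 2).mul (h₁ x)).mul (hu₂.pow 2))
  refine h.congr_deriv ?_
  simp only [Pi.sub_apply, Pi.mul_apply, Pi.pow_apply]
  ring

theorem mul_integral_sq_le_integral_sq_deriv_deriv_mul (hab : a ≤ b)
    (h₀ : ∀ x, HasDerivAt Y₀ (Y₁ x) x) (h₁ : ∀ x, HasDerivAt Y₁ (Y₂ x) x)
    (h₂ : ∀ x, HasDerivAt Y₂ (Y₃ x) x) (h₃ : ∀ x, HasDerivAt Y₃ (μ * Y₀ x) x)
    (hY : ∀ x ∈ Icc a b, 2 * Y₀ x * Y₂ x ≤ Y₁ x ^ 2) (hu : ContDiff ℝ 2 u)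
    (ha : u a = 0) (ha' : deriv u a = 0) (hb : u b = 0) (hb' : deriv u b = 0) :
    μ * ∫ x in a..b, (Y₀ x * u x) ^ 2 ≤ ∫ x in a..b, deriv (deriv fun x => Y₀ x * u x) x ^ 2 := by
  have hc₀ : Continuous Y₀ := continuous_iff_continuousAt.2 fun x => (h₀ x).continuousAt
  have hc₁ : Continuous Y₁ := continuous_iff_continuousAt.2 fun x => (h₁ x).continuousAt
  have hc₂ : Continuous Y₂ := continuous_iff_continuousAt.2 fun x => (h₂ x).continuousAt
  have hcu : Continuous u := hu.continuous
  have hcu' : Continuous (deriv u) := hu.continuous_deriv (by norm_num)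
  have hcu'' : Continuous (deriv (deriv u)) := by fun_prop
  have hint : ∀ f : ℝ → ℝ, Continuous f → IntervalIntegrable f volume a b :=
    fun f hf => hf.intervalIntegrable a b
  simp only [deriv_deriv_mul_eq h₀ h₁ hu]
  set v'' := fun x => Y₂ x * u x + 2 * Y₁ x * deriv u x + Y₀ x * deriv (deriv u) x
  set Q := fun x =>
    (Y₀ x * deriv (deriv u) x) ^ 2 + 2 * (Y₁ x ^ 2 - 2 * Y₀ x * Y₂ x) * deriv u x ^ 2
  have hQ : 0 ≤ ∫ x in a..b, Q x := intervalIntegral.integral_nonneg hab fun x hx =>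
    add_nonneg (sq_nonneg _) (mul_nonneg (mul_nonneg zero_le_two (sub_nonneg.2 (hY x hx)))
      (sq_nonneg _))
  have hflux : ∫ x in a..b, (v'' x ^ 2 - μ * (Y₀ x * u x) ^ 2 - Q x) = 0 := by
    rw [intervalIntegral.integral_eq_sub_of_hasDerivAt
      (fun x _ => hasDerivAt_groundStateFlux h₀ h₁ h₂ h₃ hu x) (hint _ (by fun_prop))]
    simp [groundStateFlux, ha, ha', hb, hb']
  rw [intervalIntegral.integral_sub (hint _ (by fun_prop)) (hint _ (by fun_prop)),
    intervalIntegral.integral_sub (hint _ (by fun_prop)) (hint _ (by fun_prop)),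
    intervalIntegral.integral_const_mul] at hflux
  linarith

theorem mul_integral_sq_le_integral_sq_deriv_deriv_of_tsupport_subset {v : ℝ → ℝ} (hab : a ≤ b)
    (h₀ : ∀ x, HasDerivAt Y₀ (Y₁ x) x) (h₁ : ∀ x, HasDerivAt Y₁ (Y₂ x) x)
    (h₂ : ∀ x, HasDerivAt Y₂ (Y₃ x) x) (h₃ : ∀ x, HasDerivAt Y₃ (μ * Y₀ x) x)
    (hY : ∀ x ∈ Icc a b, 2 * Y₀ x * Y₂ x ≤ Y₁ x ^ 2) (hY₀ : ∀ x ∈ Ioo a b, Y₀ x ≠ 0)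
    (hv : ContDiff ℝ 2 v) (hsupp : tsupport v ⊆ Ioo a b) :
    μ * ∫ x in a..b, v x ^ 2 ≤ ∫ x in a..b, deriv (deriv v) x ^ 2 := by
  set u := fun x => v x / Y₀ x
  have hv_eq : ∀ x, Y₀ x * u x = v x := fun x => by
    by_cases hx : x ∈ tsupport v
    · exact mul_div_cancel₀ _ (hY₀ x (hsupp hx))
    · simp [u, image_eq_zero_of_notMem_tsupport hx]
  have hu_supp : tsupport u ⊆ tsupport v :=
    closure_mono (by simp [u, Function.support_div])
  have hvanish : ∀ c ∉ Ioo a b, u c = 0 ∧ deriv u c = 0 := fun c hc =>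
    ⟨image_eq_zero_of_notMem_tsupport fun h => hc (hsupp (hu_supp h)),
      image_eq_zero_of_notMem_tsupport fun h => hc (hsupp (hu_supp (tsupport_deriv_subset h)))⟩
  obtain ⟨ha, ha'⟩ := hvanish a (by simp)
  obtain ⟨hb, hb'⟩ := hvanish b (by simp)
  have hu : ContDiff ℝ 2 u := contDiff_div_of_ne_zero_on_tsupport hv
    (contDiff_two_of_hasDerivAt h₀ h₁ h₂) fun x hx => hY₀ x (hsupp hx)
  simpa only [hv_eq, show (fun x => Y₀ x * u x) = v from funext hv_eq] using
    mul_integral_sq_le_integral_sq_deriv_deriv_mul hab h₀ h₁ h₂ h₃ hY hu ha ha' hb hb'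

end GroundState

lemma sin_lt_sinh {t : ℝ} (ht : 0 < t) : sin t < sinh t :=
  (sin_lt ht).trans (self_lt_sinh_iff.2 ht)

lemma cos_mul_cosh_lt_one {t : ℝ} (h₀ : 0 < t) (hπ : t ≤ π) : cos t * cosh t < 1 := by
  have hg' : StrictAntiOn (fun x => cos x * sinh x - sin x * cosh x) (Icc 0 π) := by
    refine strictAntiOn_of_hasDerivWithinAt_neg (convex_Icc 0 π) (by fun_prop)
      (fun x _ => (((hasDerivAt_cos x).mul (hasDerivAt_sinh x)).sub
        ((hasDerivAt_sin x).mul (hasDerivAt_cosh x))).hasDerivWithinAt) fun x hx => ?_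
    rw [interior_Icc] at hx
    nlinarith [sin_pos_of_pos_of_lt_pi hx.1 hx.2, sinh_pos_iff.2 hx.1]
  have hg : StrictAntiOn (fun x => cos x * cosh x) (Icc 0 π) := by
    refine strictAntiOn_of_hasDerivWithinAt_neg (convex_Icc 0 π) (by fun_prop)
      (fun x _ => ((hasDerivAt_cos x).mul (hasDerivAt_cosh x)).hasDerivWithinAt) fun x hx => ?_
    rw [interior_Icc] at hx
    have := hg' (left_mem_Icc.2 pi_pos.le) (Ioo_subset_Icc_self hx) hx.1
    simp only [cos_zero, sinh_zero, sin_zero, cosh_zero] at this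
    linarith
  simpa using hg (left_mem_Icc.2 pi_pos.le) ⟨h₀.le, hπ⟩ h₀

lemma cos_mul_cosh_lt_one_of_lt_isLeast {ω t : ℝ}
    (hω : IsLeast {x : ℝ | 0 < x ∧ cos x * cosh x = 1} ω) (ht : t ∈ Ioo 0 ω) :
    cos t * cosh t < 1 := by
  by_contra! h
  rcases le_or_gt t (π / 2) with hle | hlt
  · exact h.not_gt (cos_mul_cosh_lt_one ht.1 (hle.trans (by linarith [pi_pos])))
  · obtain ⟨r, hr, hr1⟩ := intermediate_value_Icc hlt.le (by fun_prop : Continuous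
      fun x => cos x * cosh x).continuousOn ⟨by simp, h⟩
    exact (hω.2 ⟨(pi_div_two_pos).trans_le hr.1, hr1⟩).not_gt (hr.2.trans_lt ht.2)

section BeamMode

variable (σ : ℝ)

def beamMode (t : ℝ) : ℝ := cosh t - cos t - σ * (sinh t - sin t)

def beamMode₁ (t : ℝ) : ℝ := sinh t + sin t - σ * (cosh t - cos t)

def beamMode₂ (t : ℝ) : ℝ := cosh t + cos t - σ * (sinh t + sin t)

def beamMode₃ (t : ℝ) : ℝ := sinh t - sin t - σ * (cosh t + cos t)

lemma hasDerivAt_beamMode (t : ℝ) : HasDerivAt (beamMode σ) (beamMode₁ σ t) t :=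
  (((hasDerivAt_cosh t).sub (hasDerivAt_cos t)).sub
    (((hasDerivAt_sinh t).sub (hasDerivAt_sin t)).const_mul σ)).congr_deriv
    (by simp only [beamMode₁]; ring)

lemma hasDerivAt_beamMode₁ (t : ℝ) : HasDerivAt (beamMode₁ σ) (beamMode₂ σ t) t :=
  (((hasDerivAt_sinh t).add (hasDerivAt_sin t)).sub
    (((hasDerivAt_cosh t).sub (hasDerivAt_cos t)).const_mul σ)).congr_deriv
    (by simp only [beamMode₂]; ring)

lemma hasDerivAt_beamMode₂ (t : ℝ) : HasDerivAt (beamMode₂ σ) (beamMode₃ σ t) t :=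
  (((hasDerivAt_cosh t).add (hasDerivAt_cos t)).sub
    (((hasDerivAt_sinh t).add (hasDerivAt_sin t)).const_mul σ)).congr_deriv
    (by simp only [beamMode₃]; ring)

lemma hasDerivAt_beamMode₃ (t : ℝ) : HasDerivAt (beamMode₃ σ) (beamMode σ t) t :=
  (((hasDerivAt_sinh t).sub (hasDerivAt_sin t)).sub
    (((hasDerivAt_cosh t).add (hasDerivAt_cos t)).const_mul σ)).congr_deriv
    (by simp only [beamMode]; ring)

end BeamMode

section FirstMode

variable {ω : ℝ}

def beamRatio (t : ℝ) : ℝ := (cosh t - cos t) / (sinh t - sin t)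

lemma beamMode_eq_mul_sub_beamRatio (σ : ℝ) {t : ℝ} (ht : 0 < t) :
    beamMode σ t = (sinh t - sin t) * (beamRatio t - σ) := by
  have := (sub_pos.2 (sin_lt_sinh ht)).ne'
  rw [beamMode, beamRatio]
  field_simp

lemma hasDerivAt_beamRatio {t : ℝ} (ht : 0 < t) :
    HasDerivAt beamRatio (2 * (cos t * cosh t - 1) / (sinh t - sin t) ^ 2) t := by
  refine (((hasDerivAt_cosh t).sub (hasDerivAt_cos t)).div
    ((hasDerivAt_sinh t).sub (hasDerivAt_sin t)) (sub_pos.2 (sin_lt_sinh ht)).ne').congr_deriv ?_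
  congr 1
  simp only [Pi.sub_apply]
  linear_combination (-1 : ℝ) * sin_sq_add_cos_sq t - cosh_sq_sub_sinh_sq t

lemma beamRatio_strictAntiOn (hlt : ∀ t ∈ Ioo 0 ω, cos t * cosh t < 1) :
    StrictAntiOn beamRatio (Ioc 0 ω) := by
  have hden : ∀ t ∈ Ioc 0 ω, sinh t - sin t ≠ 0 := fun t ht => (sub_pos.2 (sin_lt_sinh ht.1)).ne'
  refine strictAntiOn_of_hasDerivWithinAt_neg (convex_Ioc 0 ω)
    (ContinuousOn.div (by fun_prop) (by fun_prop) hden)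
    (fun t ht => (hasDerivAt_beamRatio (interior_subset ht).1).hasDerivWithinAt) fun t ht => ?_
  rw [interior_Ioc] at ht
  exact div_neg_of_neg_of_pos (by linarith [hlt t ht]) (pow_pos (sub_pos.2 (sin_lt_sinh ht.1)) 2)

lemma beamMode_beamRatio_pos (hlt : ∀ t ∈ Ioo 0 ω, cos t * cosh t < 1) {t : ℝ}
    (ht : t ∈ Ioo 0 ω) : 0 < beamMode (beamRatio ω) t := by
  rw [beamMode_eq_mul_sub_beamRatio _ ht.1]
  exact mul_pos (sub_pos.2 (sin_lt_sinh ht.1)) (sub_pos.2 <|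
    beamRatio_strictAntiOn hlt ⟨ht.1, ht.2.le⟩ ⟨ht.1.trans ht.2, le_rfl⟩ ht.2)

lemma beamMode₁_beamRatio_self (hω₀ : 0 < ω) (hω : cos ω * cosh ω = 1) :
    beamMode₁ (beamRatio ω) ω = 0 := by
  have := (sub_pos.2 (sin_lt_sinh hω₀)).ne'
  rw [beamMode₁, beamRatio]
  field_simp
  nlinarith [sin_sq_add_cos_sq ω, cosh_sq_sub_sinh_sq ω]

lemma two_mul_beamMode_mul_beamMode₂_le (hω₀ : 0 < ω) (hω : cos ω * cosh ω = 1)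
    (hlt : ∀ t ∈ Ioo 0 ω, cos t * cosh t < 1) {t : ℝ} (ht : t ∈ Icc 0 ω) :
    2 * beamMode (beamRatio ω) t * beamMode₂ (beamRatio ω) t ≤ beamMode₁ (beamRatio ω) t ^ 2 := by
  set σ := beamRatio ω
  have hψ : MonotoneOn (beamMode₃ σ) (Icc 0 ω) :=
    monotoneOn_of_hasDerivWithinAt_nonneg (convex_Icc 0 ω)
      (fun x _ => (hasDerivAt_beamMode₃ σ x).continuousAt.continuousWithinAt)
      (fun x _ => (hasDerivAt_beamMode₃ σ x).hasDerivWithinAt)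
      fun x hx => (beamMode_beamRatio_pos hlt (by rwa [interior_Icc] at hx)).le
  have hF : ∀ x, HasDerivAt (fun x => beamMode₁ σ x ^ 2 - 2 * beamMode σ x * beamMode₂ σ x)
      (-(2 * beamMode σ x * beamMode₃ σ x)) x := fun x =>
    (((hasDerivAt_beamMode₁ σ x).pow 2).sub (((hasDerivAt_beamMode σ x).const_mul 2).mul
      (hasDerivAt_beamMode₂ σ x))).congr_deriv (by push_cast; ring)
  have hσ₀ : beamMode σ ω = 0 := by
    rw [beamMode_eq_mul_sub_beamRatio _ hω₀, sub_self, mul_zero]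
  have hσ₁ : beamMode₁ σ ω = 0 := beamMode₁_beamRatio_self hω₀ hω
  have := nonneg_of_hasDerivAt_neg_mul_of_monotoneOn hF
    (fun x hx => mul_nonneg zero_le_two (beamMode_beamRatio_pos hlt hx).le) hψ
    (by simp [beamMode, beamMode₁, beamMode₂]) (by simp [hσ₀, hσ₁]) ht
  linarith

theorem pow_four_mul_integral_sq_le_integral_sq_deriv_deriv (hω₀ : 0 < ω)
    (hω : cos ω * cosh ω = 1) (hlt : ∀ t ∈ Ioo 0 ω, cos t * cosh t < 1) {v : ℝ → ℝ}
    (hv : ContDiff ℝ 2 v) (hsupp : tsupport v ⊆ Ioo 0 1) :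
    ω ^ 4 * ∫ x in (0 : ℝ)..1, v x ^ 2 ≤ ∫ x in (0 : ℝ)..1, deriv (deriv v) x ^ 2 := by
  set σ := beamRatio ω
  refine mul_integral_sq_le_integral_sq_deriv_deriv_of_tsupport_subset zero_le_one
    (Y₀ := fun x => beamMode σ (ω * x)) (Y₁ := fun x => ω * beamMode₁ σ (ω * x))
    (Y₂ := fun x => ω ^ 2 * beamMode₂ σ (ω * x)) (Y₃ := fun x => ω ^ 3 * beamMode₃ σ (ω * x))
    (hasDerivAt_comp_mul (hasDerivAt_beamMode σ) ω)
    (fun x => ((hasDerivAt_comp_mul (hasDerivAt_beamMode₁ σ) ω x).const_mul ω).congr_deriv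
      (by ring))
    (fun x => ((hasDerivAt_comp_mul (hasDerivAt_beamMode₂ σ) ω x).const_mul (ω ^ 2)).congr_deriv
      (by ring))
    (fun x => ((hasDerivAt_comp_mul (hasDerivAt_beamMode₃ σ) ω x).const_mul (ω ^ 3)).congr_deriv
      (by ring))
    (fun x hx => ?_) (fun x hx => (beamMode_beamRatio_pos hlt
      ⟨mul_pos hω₀ hx.1, mul_lt_of_lt_one_right hω₀ hx.2⟩).ne') hv hsupp
  have := two_mul_beamMode_mul_beamMode₂_le hω₀ hω hlt
    ⟨mul_nonneg hω₀.le hx.1, mul_le_of_le_one_right hω₀.le hx.2⟩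
  nlinarith [mul_le_mul_of_nonneg_left this (sq_nonneg ω)]

end FirstMode

/-- Clamped-beam inequality: for smooth `v` compactly supported in `(0,1)`,
`∫₀¹ (v'')² ≥ ω₁⁴ ∫₀¹ v²`, where `ω₁` is the smallest positive root of
`cos ω · cosh ω = 1`. -/
theorem clamped_beam_inequality
    (ω : ℝ) (hω : IsLeast {x : ℝ | 0 < x ∧ Real.cos x * Real.cosh x = 1} ω)
    (v : ℝ → ℝ) (hv : Adm1 v) :
    (∫ x in (0:ℝ)..1, (deriv (deriv v) x) ^ 2) ≥
      ω ^ 4 * ∫ x in (0:ℝ)..1, (v x) ^ 2 := by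
  obtain ⟨hv, -, hsupp⟩ := hv
  exact pow_four_mul_integral_sq_le_integral_sq_deriv_deriv hω.1.1 hω.1.2
    (fun _ => cos_mul_cosh_lt_one_of_lt_isLeast hω) (hv.of_le (WithTop.coe_le_coe.2 le_top)) hsupp
end
end
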